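/- arXiv:1909.00477 — 7 statements merged into one kernel-verified Lean document; each statement's English description precedes it below -/
import Mathlib

section
/- Let T(t)=C₁²t+C₀, X(t,x)=C₁x+C₁C₂t+C₃ with C₁≠0, and let φ:ℝ→ℝ be smooth with φ'(u)≠0 for all u. Define the point transformation t̃=T(t), x̃=X(t,x), ũ=φ(u). If u(t,x) is a smooth solution of u_t = u_xx + f(u,u_x), then ũ(t̃,x̃) := φ(u(T⁻¹(t̃), X-inverse)) (i.e. the transformed function) solves ũ_t̃ = ũ_x̃x̃ + f̃(ũ, ũ_x̃), where f̃(ũ,ṽ) = C₁⁻²(φ'(u)f(u,v) − C₂φ'(u)v − φ''(u)v²) expressed through ũ=φ(u), ṽ=φ'(u)v/C₁. -/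
noncomputable section

/-- Partial derivative with respect to the first argument. -/
def pd1 (g : ℝ → ℝ → ℝ) (a b : ℝ) : ℝ := deriv (fun a' => g a' b) a
/-- Partial derivative with respect to the second argument. -/
def pd2 (g : ℝ → ℝ → ℝ) (a b : ℝ) : ℝ := deriv (fun b' => g a b') b
/-- Smoothness of a function of two real variables. -/
def Smooth2 (g : ℝ → ℝ → ℝ) : Prop := ContDiff ℝ (⊤ : ℕ∞) (fun p : ℝ × ℝ => g p.1 p.2)

/-- the point transformation t̃ = C₁²t + C₀, x̃ = C₁x + C₁C₂t + C₃, ũ = φ(u)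
maps any solution of u_t = u_xx + f(u,u_x) to a solution of ũ_t̃ = ũ_x̃x̃ + f̃(ũ,ũ_x̃),
where f̃(φ(u), φ'(u)v/C₁) = C₁⁻²(φ'(u) f(u,v) − C₂ φ'(u) v − φ''(u) v²). -/
theorem statement0
    (C₀ C₁ C₂ C₃ : ℝ) (hC₁ : C₁ ≠ 0)
    (φ : ℝ → ℝ) (hφ : ContDiff ℝ (⊤ : ℕ∞) φ) (hφ' : ∀ s : ℝ, deriv φ s ≠ 0)
    (f : ℝ → ℝ → ℝ) (hf : Smooth2 f)
    (u : ℝ → ℝ → ℝ) (hu : Smooth2 u)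
    (hsol : ∀ t x : ℝ, pd1 u t x = pd2 (pd2 u) t x + f (u t x) (pd2 u t x))
    (ftil : ℝ → ℝ → ℝ) (hftil : Smooth2 ftil)
    (hftildef : ∀ a b : ℝ,
      ftil (φ a) (deriv φ a * b / C₁) =
        (C₁ ^ 2)⁻¹ * (deriv φ a * f a b - C₂ * deriv φ a * b - deriv (deriv φ) a * b ^ 2))
    (w : ℝ → ℝ → ℝ)
    (hw : ∀ ts xs : ℝ,
      w ts xs = φ (u ((ts - C₀) / C₁ ^ 2) ((xs - C₃) / C₁ - C₂ * (ts - C₀) / C₁ ^ 2))) :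
    ∀ ts xs : ℝ, pd1 w ts xs = pd2 (pd2 w) ts xs + ftil (w ts xs) (pd2 w ts xs) := by
  have hC1sq : (C₁ : ℝ) ^ 2 ≠ 0 := pow_ne_zero 2 hC₁
  -- basic derivative facts
  have hφd : ∀ s : ℝ, HasDerivAt φ (deriv φ s) s :=
    fun s => ((hφ.differentiable (by simp)) s).hasDerivAt
  have hφdd : ∀ s : ℝ, HasDerivAt (deriv φ) (deriv (deriv φ) s) s := by
    intro s
    have h2 : ContDiff ℝ (⊤ : ℕ∞) (deriv φ) :=
      (contDiff_infty_iff_deriv.mp (hφ.of_le (by simp))).2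
    exact ((h2.differentiable (by simp)) s).hasDerivAt
  have hux : ∀ t x : ℝ, HasDerivAt (fun y => u t y) (pd2 u t x) x := by
    intro t x
    have h1 : ContDiff ℝ (⊤ : ℕ∞) (fun y => u t y) := hu.comp (contDiff_prodMk_right t)
    exact ((h1.differentiable (by simp)) x).hasDerivAt
  have huxx : ∀ t x : ℝ, HasDerivAt (fun y => pd2 u t y) (pd2 (pd2 u) t x) x := by
    intro t x
    have h1 : ContDiff ℝ (⊤ : ℕ∞) (fun y => u t y) := hu.comp (contDiff_prodMk_right t)
    have h2 : ContDiff ℝ (⊤ : ℕ∞) (deriv (fun y => u t y)) :=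
      (contDiff_infty_iff_deriv.mp (h1.of_le (by simp))).2
    have h3 : DifferentiableAt ℝ (fun y => pd2 u t y) x := by
      have := (h2.differentiable (by simp)) x
      simpa [pd2] using this
    exact h3.hasDerivAt
  -- fderiv of the two-variable function
  set F : ℝ × ℝ → ℝ := fun p => u p.1 p.2 with hF
  have hFd : ∀ p : ℝ × ℝ, HasFDerivAt F (fderiv ℝ F p) p :=
    fun p => ((hu.differentiable (by simp)) p).hasFDerivAt
  have hA1 : ∀ p : ℝ × ℝ, fderiv ℝ F p (1, 0) = pd1 u p.1 p.2 := by
    intro p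
    have hc : HasDerivAt (fun s : ℝ => (s, p.2)) ((1 : ℝ), (0 : ℝ)) p.1 :=
      (hasDerivAt_id p.1).prodMk (hasDerivAt_const p.1 p.2)
    have h1 : HasDerivAt (fun s => u s p.2) (fderiv ℝ F p (1, 0)) p.1 := by
      have := (hFd p).comp_hasDerivAt p.1 hc
      exact this
    exact (h1.deriv).symm
  have hA2 : ∀ p : ℝ × ℝ, fderiv ℝ F p (0, 1) = pd2 u p.1 p.2 := by
    intro p
    have hc : HasDerivAt (fun y : ℝ => (p.1, y)) ((0 : ℝ), (1 : ℝ)) p.2 :=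
      (hasDerivAt_const p.2 p.1).prodMk (hasDerivAt_id p.2)
    have h1 : HasDerivAt (fun y => u p.1 y) (fderiv ℝ F p (0, 1)) p.2 := by
      have := (hFd p).comp_hasDerivAt p.2 hc
      exact this
    exact (h1.deriv).symm
  -- notation for the inverse transformation
  set τ : ℝ → ℝ := fun ts => (ts - C₀) / C₁ ^ 2 with hτdef
  set ξ : ℝ → ℝ → ℝ := fun ts xs => (xs - C₃) / C₁ - C₂ * (ts - C₀) / C₁ ^ 2 with hξdef
  have hξx : ∀ ts xs : ℝ, HasDerivAt (fun xs' => ξ ts xs') (1 / C₁) xs := by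
    intro ts xs
    exact (((hasDerivAt_id xs).sub_const C₃).div_const C₁).sub_const
      (C₂ * (ts - C₀) / C₁ ^ 2)
  -- first spatial derivative of w
  have hWx : ∀ ts xs : ℝ, HasDerivAt (fun xs' => w ts xs')
      (deriv φ (u (τ ts) (ξ ts xs)) * (pd2 u (τ ts) (ξ ts xs) * (1 / C₁))) xs := by
    intro ts xs
    have hinner : HasDerivAt (fun xs' => u (τ ts) (ξ ts xs'))
        (pd2 u (τ ts) (ξ ts xs) * (1 / C₁)) xs :=
      (hux (τ ts) (ξ ts xs)).comp xs (hξx ts xs)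
    have h0 := (hφd (u (τ ts) (ξ ts xs))).comp xs hinner
    have he : (fun xs' => w ts xs') = fun xs' => φ (u (τ ts) (ξ ts xs')) :=
      funext fun xs' => hw ts xs'
    rw [he]
    exact h0
  have hpd2w : ∀ ts xs : ℝ, pd2 w ts xs =
      deriv φ (u (τ ts) (ξ ts xs)) * pd2 u (τ ts) (ξ ts xs) / C₁ := by
    intro ts xs
    have := (hWx ts xs).deriv
    rw [pd2, this]; ring
  intro ts xs
  set U : ℝ := u (τ ts) (ξ ts xs) with hU
  set V : ℝ := pd2 u (τ ts) (ξ ts xs) with hV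
  set W : ℝ := pd2 (pd2 u) (τ ts) (ξ ts xs) with hW
  -- time derivative of w
  have hct : HasDerivAt (fun ts' : ℝ => ((ts' - C₀) / C₁ ^ 2, ξ ts' xs))
      ((1 / C₁ ^ 2 : ℝ), (-(C₂ / C₁ ^ 2) : ℝ)) ts := by
    have h1 : HasDerivAt (fun ts' : ℝ => (ts' - C₀) / C₁ ^ 2) (1 / C₁ ^ 2) ts := by
      simpa using ((hasDerivAt_id ts).sub_const C₀).div_const (C₁ ^ 2)
    have h2 : HasDerivAt (fun ts' : ℝ => ξ ts' xs) (-(C₂ / C₁ ^ 2)) ts := by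
      have h3 : HasDerivAt (fun ts' : ℝ => C₂ * (ts' - C₀) / C₁ ^ 2) (C₂ / C₁ ^ 2) ts := by
        have := (((hasDerivAt_id ts).sub_const C₀).const_mul C₂).div_const (C₁ ^ 2)
        simpa using this
      have := (hasDerivAt_const ts ((xs - C₃) / C₁)).sub h3
      simp only [zero_sub] at this
      exact this
    exact h1.prodMk h2
  have hF1 : fderiv ℝ F (τ ts, ξ ts xs) ((1 / C₁ ^ 2 : ℝ), (-(C₂ / C₁ ^ 2) : ℝ)) =
      (1 / C₁ ^ 2) * pd1 u (τ ts) (ξ ts xs) - (C₂ / C₁ ^ 2) * V := by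
    have hv : ((1 / C₁ ^ 2 : ℝ), (-(C₂ / C₁ ^ 2) : ℝ)) =
        (1 / C₁ ^ 2 : ℝ) • ((1 : ℝ), (0 : ℝ)) + (-(C₂ / C₁ ^ 2) : ℝ) • ((0 : ℝ), (1 : ℝ)) := by
      simp [Prod.ext_iff]
    rw [hv, map_add, map_smul, map_smul, hA1, hA2]
    simp [smul_eq_mul, hV]
    ring
  have hWt : HasDerivAt (fun ts' => w ts' xs)
      (deriv φ U * ((1 / C₁ ^ 2) * pd1 u (τ ts) (ξ ts xs) - (C₂ / C₁ ^ 2) * V)) ts := by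
    have hinner : HasDerivAt (fun ts' => u (τ ts') (ξ ts' xs))
        ((1 / C₁ ^ 2) * pd1 u (τ ts) (ξ ts xs) - (C₂ / C₁ ^ 2) * V) ts := by
      have := (hFd (τ ts, ξ ts xs)).comp_hasDerivAt ts hct
      rw [hF1] at this
      exact this
    have h0 := (hφd U).comp ts hinner
    have he : (fun ts' => w ts' xs) = fun ts' => φ (u (τ ts') (ξ ts' xs)) :=
      funext fun ts' => hw ts' xs
    rw [he]
    exact h0
  -- second spatial derivative of w
  have hWxx : HasDerivAt (fun xs' => pd2 w ts xs')
      ((deriv (deriv φ) U * (V * (1 / C₁)) * V + deriv φ U * (W * (1 / C₁))) / C₁) xs := by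
    have he : (fun xs' => pd2 w ts xs') =
        fun xs' => deriv φ (u (τ ts) (ξ ts xs')) * pd2 u (τ ts) (ξ ts xs') / C₁ :=
      funext fun xs' => hpd2w ts xs'
    rw [he]
    have hinner : HasDerivAt (fun xs' => u (τ ts) (ξ ts xs')) (V * (1 / C₁)) xs :=
      (hux (τ ts) (ξ ts xs)).comp xs (hξx ts xs)
    have hg : HasDerivAt (fun xs' => deriv φ (u (τ ts) (ξ ts xs')))
        (deriv (deriv φ) U * (V * (1 / C₁))) xs := by
        have h0 := (hφdd U).comp xs hinner
        exact h0
    have hh : HasDerivAt (fun xs' => pd2 u (τ ts) (ξ ts xs')) (W * (1 / C₁)) xs :=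
      (huxx (τ ts) (ξ ts xs)).comp xs (hξx ts xs)
    exact (hg.mul hh).div_const C₁
  -- putting it together
  have e1 : pd1 w ts xs =
      deriv φ U * ((1 / C₁ ^ 2) * pd1 u (τ ts) (ξ ts xs) - (C₂ / C₁ ^ 2) * V) := hWt.deriv
  have e2 : pd2 (pd2 w) ts xs =
      (deriv (deriv φ) U * (V * (1 / C₁)) * V + deriv φ U * (W * (1 / C₁))) / C₁ := by
    rw [pd2]
    exact hWxx.deriv
  have e3 : w ts xs = φ U := hw ts xs
  have e4 : pd2 w ts xs = deriv φ U * V / C₁ := hpd2w ts xs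
  have e5 : ftil (φ U) (deriv φ U * V / C₁) =
      (C₁ ^ 2)⁻¹ * (deriv φ U * f U V - C₂ * deriv φ U * V - deriv (deriv φ) U * V ^ 2) :=
    hftildef U V
  have e6 : pd1 u (τ ts) (ξ ts xs) = W + f U V := hsol (τ ts) (ξ ts xs)
  rw [e1, e2, e3, e4, e5, e6]
  field_simp
  ring
end
end

section
/- Define S(f) = 2f_u − v f_uv and W(f) = 2f − 2v f_v + v² f_vv. Under the equivalence transformation ũ=φ(u), ṽ=φ'v/C₁, f̃ = C₁⁻²(φ'f − C₂φ'v − φ''v²), the transformed quantity S̃ = 2f̃_ũ − ṽ f̃_ũṽ satisfies S̃ = C₁⁻²S + C₁⁻²(φ''/φ')W. In particular, on the subset where W = 0, S is a relative invariant: S̃ = C₁⁻² S. -/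
noncomputable section

/-- The transformed variable ṽ = φ'(u) v / C₁, as a function of (u,v). -/
def Vtil (φ : ℝ → ℝ) (C₁ : ℝ) : ℝ → ℝ → ℝ := fun u v => deriv φ u * v / C₁

/-- The transformed arbitrary element f̃ = C₁⁻²(φ'f − C₂φ'v − φ''v²), as a function of (u,v). -/
def Ftil (f : ℝ → ℝ → ℝ) (φ : ℝ → ℝ) (C₁ C₂ : ℝ) : ℝ → ℝ → ℝ :=
  fun u v => (C₁ ^ 2)⁻¹ *
    (deriv φ u * f u v - C₂ * deriv φ u * v - deriv (deriv φ) u * v ^ 2)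

/-- The implicit total differentiation operator D_ũ = (1/φ')D_u − (φ''/(φ')²) v D_v. -/
def Dut (φ : ℝ → ℝ) (g : ℝ → ℝ → ℝ) : ℝ → ℝ → ℝ :=
  fun u v => (deriv φ u)⁻¹ * pd1 g u v -
    deriv (deriv φ) u / (deriv φ u) ^ 2 * v * pd2 g u v

/-- The implicit total differentiation operator D_ṽ = (C₁/φ') D_v. -/
def Dvt (φ : ℝ → ℝ) (C₁ : ℝ) (g : ℝ → ℝ → ℝ) : ℝ → ℝ → ℝ :=
  fun u v => C₁ / deriv φ u * pd2 g u v

/-- The relative invariant W = 2f − 2v f_v + v² f_vv. -/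
def Wrel (f : ℝ → ℝ → ℝ) : ℝ → ℝ → ℝ :=
  fun u v => 2 * f u v - 2 * v * pd2 f u v + v ^ 2 * pd2 (pd2 f) u v

/-- The relative conditional invariant S = 2f_u − v f_uv. -/
def Srel (f : ℝ → ℝ → ℝ) : ℝ → ℝ → ℝ :=
  fun u v => 2 * pd1 f u v - v * pd2 (pd1 f) u v

open scoped ContDiff

section Helpers

lemma hd1 {g : ℝ → ℝ → ℝ} (hg : ContDiff ℝ ∞ (fun p : ℝ × ℝ => g p.1 p.2)) (u v : ℝ) :
    HasDerivAt (fun a => g a v) (pd1 g u v) u := by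
  have : DifferentiableAt ℝ (fun a : ℝ => g a v) u := by
    have := (hg.differentiable (by simp)).comp
      ((differentiable_id.prodMk (differentiable_const v)))
    exact this.differentiableAt
  exact this.hasDerivAt

lemma hd2 {g : ℝ → ℝ → ℝ} (hg : ContDiff ℝ ∞ (fun p : ℝ × ℝ => g p.1 p.2)) (u v : ℝ) :
    HasDerivAt (fun b => g u b) (pd2 g u v) v := by
  have : DifferentiableAt ℝ (fun b : ℝ => g u b) v := by
    have := (hg.differentiable (by simp)).comp
      ((differentiable_const u).prodMk differentiable_id)
    exact this.differentiableAt
  exact this.hasDerivAt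

lemma pd1_fderiv {g : ℝ → ℝ → ℝ} (hg : ContDiff ℝ ∞ (fun p : ℝ × ℝ => g p.1 p.2)) (u v : ℝ) :
    pd1 g u v = fderiv ℝ (fun p : ℝ × ℝ => g p.1 p.2) (u, v) (1, 0) := by
  have h1 : HasDerivAt (fun a : ℝ => ((a, v) : ℝ × ℝ)) (1, 0) u :=
    HasDerivAt.prodMk (hasDerivAt_id u) (hasDerivAt_const u v)
  have h2 := ((hg.differentiable (by simp) (u, v)).hasFDerivAt).comp_hasDerivAt u h1
  exact h2.deriv

lemma pd2_fderiv {g : ℝ → ℝ → ℝ} (hg : ContDiff ℝ ∞ (fun p : ℝ × ℝ => g p.1 p.2)) (u v : ℝ) :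
    pd2 g u v = fderiv ℝ (fun p : ℝ × ℝ => g p.1 p.2) (u, v) (0, 1) := by
  have h1 : HasDerivAt (fun b : ℝ => ((u, b) : ℝ × ℝ)) (0, 1) v :=
    HasDerivAt.prodMk (hasDerivAt_const v u) (hasDerivAt_id v)
  have h2 := ((hg.differentiable (by simp) (u, v)).hasFDerivAt).comp_hasDerivAt v h1
  exact h2.deriv

lemma smooth_pd1 {g : ℝ → ℝ → ℝ} (hg : ContDiff ℝ ∞ (fun p : ℝ × ℝ => g p.1 p.2)) :
    ContDiff ℝ ∞ (fun p : ℝ × ℝ => pd1 g p.1 p.2) := by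
  have h : (fun p : ℝ × ℝ => pd1 g p.1 p.2)
      = fun p => fderiv ℝ (fun q : ℝ × ℝ => g q.1 q.2) p ((1 : ℝ), (0 : ℝ)) := by
    funext p; exact pd1_fderiv hg p.1 p.2
  rw [h]
  exact (hg.fderiv_right (m := ∞) (by norm_num)).clm_apply contDiff_const

lemma smooth_pd2 {g : ℝ → ℝ → ℝ} (hg : ContDiff ℝ ∞ (fun p : ℝ × ℝ => g p.1 p.2)) :
    ContDiff ℝ ∞ (fun p : ℝ × ℝ => pd2 g p.1 p.2) := by
  have h : (fun p : ℝ × ℝ => pd2 g p.1 p.2)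
      = fun p => fderiv ℝ (fun q : ℝ × ℝ => g q.1 q.2) p ((0 : ℝ), (1 : ℝ)) := by
    funext p; exact pd2_fderiv hg p.1 p.2
  rw [h]
  exact (hg.fderiv_right (m := ∞) (by norm_num)).clm_apply contDiff_const

lemma pd_comm {g : ℝ → ℝ → ℝ} (hg : ContDiff ℝ ∞ (fun p : ℝ × ℝ => g p.1 p.2)) (u v : ℝ) :
    pd1 (pd2 g) u v = pd2 (pd1 g) u v := by
  set F := fun p : ℝ × ℝ => g p.1 p.2 with hF
  have hdF : Differentiable ℝ (fderiv ℝ F) :=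
    (hg.fderiv_right (m := ∞) (by norm_num)).differentiable (by simp)
  have key : ∀ w z : ℝ × ℝ, fderiv ℝ (fun p => fderiv ℝ F p w) (u, v) z
      = fderiv ℝ (fderiv ℝ F) (u, v) z w := by
    intro w z
    rw [fderiv_clm_apply (hdF.differentiableAt) (differentiableAt_const w)]
    simp
  have hsymm : IsSymmSndFDerivAt ℝ F (u, v) :=
    hg.contDiffAt.isSymmSndFDerivAt (by
      rw [minSmoothness_of_isRCLikeNormedField]
      rw [show ((2:WithTop ℕ∞)) = ((2:ℕ∞):WithTop ℕ∞) from rfl]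
      exact WithTop.coe_le_coe.mpr le_top)
  have e1 : pd1 (pd2 g) u v = fderiv ℝ (fderiv ℝ F) (u, v) (1, 0) (0, 1) := by
    have h0 := pd1_fderiv (g := pd2 g) (smooth_pd2 hg) u v
    rw [h0]
    have h2 : (fun p : ℝ × ℝ => pd2 g p.1 p.2)
        = fun p => fderiv ℝ F p ((0 : ℝ), (1 : ℝ)) := by
      funext p; exact pd2_fderiv hg p.1 p.2
    rw [h2, key]
  have e2 : pd2 (pd1 g) u v = fderiv ℝ (fderiv ℝ F) (u, v) (0, 1) (1, 0) := by
    have h0 := pd2_fderiv (g := pd1 g) (smooth_pd1 hg) u v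
    rw [h0]
    have h2 : (fun p : ℝ × ℝ => pd1 g p.1 p.2)
        = fun p => fderiv ℝ F p ((1 : ℝ), (0 : ℝ)) := by
      funext p; exact pd1_fderiv hg p.1 p.2
    rw [h2, key]
  rw [e1, e2, hsymm (1, 0) (0, 1)]

end Helpers

/-- S = 2f_u − v f_uv satisfies
S̃ = 2f̃_ũ − ṽ f̃_ũṽ = C₁⁻² S + C₁⁻² (φ''/φ') W; on the subset where W = 0,
S is a relative invariant: S̃ = C₁⁻² S. -/
theorem statement6
    (f : ℝ → ℝ → ℝ) (hf : Smooth2 f)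
    (φ : ℝ → ℝ) (hφ : ContDiff ℝ (⊤ : ℕ∞) φ)
    (C₁ C₂ : ℝ) (hC₁ : C₁ ≠ 0) (hφ' : ∀ s : ℝ, deriv φ s ≠ 0) :
    ∀ u v : ℝ,
      (2 * Dut φ (Ftil f φ C₁ C₂) u v -
        Vtil φ C₁ u v * Dut φ (Dvt φ C₁ (Ftil f φ C₁ C₂)) u v
        = (C₁ ^ 2)⁻¹ * Srel f u v +
          (C₁ ^ 2)⁻¹ * (deriv (deriv φ) u / deriv φ u) * Wrel f u v) ∧
      (Wrel f u v = 0 →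
        2 * Dut φ (Ftil f φ C₁ C₂) u v -
          Vtil φ C₁ u v * Dut φ (Dvt φ C₁ (Ftil f φ C₁ C₂)) u v
          = (C₁ ^ 2)⁻¹ * Srel f u v) := by
  have hfi : ContDiff ℝ ∞ (fun p : ℝ × ℝ => f p.1 p.2) := hf.of_le (by simp)
  have hphi : ContDiff ℝ ∞ φ := hφ.of_le (by simp)
  obtain ⟨hφd, hφ'c⟩ := contDiff_infty_iff_deriv.mp hphi
  obtain ⟨hφ'd, hφ''c⟩ := contDiff_infty_iff_deriv.mp hφ'c
  obtain ⟨hφ''d, -⟩ := contDiff_infty_iff_deriv.mp hφ''c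
  have hpd2f : ContDiff ℝ ∞ (fun p : ℝ × ℝ => pd2 f p.1 p.2) := smooth_pd2 hfi
  -- pd1 of Ftil
  have pd1F : ∀ u v : ℝ, pd1 (Ftil f φ C₁ C₂) u v = (C₁ ^ 2)⁻¹ *
      (deriv (deriv φ) u * f u v + deriv φ u * pd1 f u v
        - C₂ * deriv (deriv φ) u * v - deriv (deriv (deriv φ)) u * v ^ 2) := by
    intro u v
    have h1 : HasDerivAt (deriv φ) (deriv (deriv φ) u) u := (hφ'd u).hasDerivAt
    have h2 : HasDerivAt (deriv (deriv φ)) (deriv (deriv (deriv φ)) u) u :=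
      (hφ''d u).hasDerivAt
    have hf1 : HasDerivAt (fun a => f a v) (pd1 f u v) u := hd1 hfi u v
    have e : deriv (fun a' => (C₁ ^ 2)⁻¹ *
        (deriv φ a' * f a' v - C₂ * deriv φ a' * v - deriv (deriv φ) a' * v ^ 2)) u = _ :=
      HasDerivAt.deriv (by
        exact (((h1.mul hf1).sub ((h1.const_mul C₂).mul_const v)).sub
          (h2.mul_const (v ^ 2))).const_mul ((C₁ ^ 2)⁻¹))
    show deriv (fun a' => Ftil f φ C₁ C₂ a' v) u = _
    simp only [Ftil]
    rw [e]
  -- pd2 of Ftil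
  have pd2F : ∀ u v : ℝ, pd2 (Ftil f φ C₁ C₂) u v = (C₁ ^ 2)⁻¹ *
      (deriv φ u * pd2 f u v - C₂ * deriv φ u - deriv (deriv φ) u * (2 * v)) := by
    intro u v
    have hf2 : HasDerivAt (fun b => f u b) (pd2 f u v) v := hd2 hfi u v
    have e : deriv (fun b' => (C₁ ^ 2)⁻¹ *
        (deriv φ u * f u b' - C₂ * deriv φ u * b' - deriv (deriv φ) u * b' ^ 2)) v = _ :=
      HasDerivAt.deriv (by
        exact (((hf2.const_mul (deriv φ u)).sub
          ((hasDerivAt_id v).const_mul (C₂ * deriv φ u))).sub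
          ((hasDerivAt_pow 2 v).const_mul (deriv (deriv φ) u))).const_mul ((C₁ ^ 2)⁻¹))
    show deriv (fun b' => Ftil f φ C₁ C₂ u b') v = _
    simp only [Ftil]
    rw [e]; norm_num
  -- simplified form of Dvt(Ftil)
  have hG : Dvt φ C₁ (Ftil f φ C₁ C₂) = fun u v => C₁⁻¹ * pd2 f u v - C₁⁻¹ * C₂
      - 2 * C₁⁻¹ * (deriv (deriv φ) u / deriv φ u) * v := by
    funext u v
    simp only [Dvt]
    rw [pd2F u v]
    field_simp [hC₁, hφ' u]
  -- pd1 of Dvt(Ftil)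
  have pd1G : ∀ u v : ℝ, pd1 (Dvt φ C₁ (Ftil f φ C₁ C₂)) u v
      = C₁⁻¹ * pd1 (pd2 f) u v - 2 * C₁⁻¹ *
        ((deriv (deriv (deriv φ)) u * deriv φ u - deriv (deriv φ) u * deriv (deriv φ) u)
          / (deriv φ u) ^ 2) * v := by
    intro u v
    have h1 : HasDerivAt (deriv φ) (deriv (deriv φ) u) u := (hφ'd u).hasDerivAt
    have h2 : HasDerivAt (deriv (deriv φ)) (deriv (deriv (deriv φ)) u) u :=
      (hφ''d u).hasDerivAt
    have hpf : HasDerivAt (fun a => pd2 f a v) (pd1 (pd2 f) u v) u := hd1 hpd2f u v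
    have hdiv : HasDerivAt (fun a => deriv (deriv φ) a / deriv φ a)
        ((deriv (deriv (deriv φ)) u * deriv φ u - deriv (deriv φ) u * deriv (deriv φ) u)
          / (deriv φ u) ^ 2) u := h2.div h1 (hφ' u)
    rw [hG]
    have e : deriv (fun a' => C₁⁻¹ * pd2 f a' v - C₁⁻¹ * C₂
        - 2 * C₁⁻¹ * (deriv (deriv φ) a' / deriv φ a') * v) u = _ :=
      HasDerivAt.deriv (by
        exact ((hpf.const_mul C₁⁻¹).sub (hasDerivAt_const u (C₁⁻¹ * C₂))).sub
          ((hdiv.const_mul (2 * C₁⁻¹)).mul_const v))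
    show deriv (fun a' => C₁⁻¹ * pd2 f a' v - C₁⁻¹ * C₂
      - 2 * C₁⁻¹ * (deriv (deriv φ) a' / deriv φ a') * v) u = _
    rw [e]; ring
  -- pd2 of Dvt(Ftil)
  have pd2G : ∀ u v : ℝ, pd2 (Dvt φ C₁ (Ftil f φ C₁ C₂)) u v
      = C₁⁻¹ * pd2 (pd2 f) u v - 2 * C₁⁻¹ * (deriv (deriv φ) u / deriv φ u) := by
    intro u v
    have hpf2 : HasDerivAt (fun b => pd2 f u b) (pd2 (pd2 f) u v) v := hd2 hpd2f u v
    rw [hG]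
    have e : deriv (fun b' => C₁⁻¹ * pd2 f u b' - C₁⁻¹ * C₂
        - 2 * C₁⁻¹ * (deriv (deriv φ) u / deriv φ u) * b') v = _ :=
      HasDerivAt.deriv (by
        exact ((hpf2.const_mul C₁⁻¹).sub (hasDerivAt_const v (C₁⁻¹ * C₂))).sub
          (((hasDerivAt_id v).const_mul (2 * C₁⁻¹ * (deriv (deriv φ) u / deriv φ u)))))
    show deriv (fun b' => C₁⁻¹ * pd2 f u b' - C₁⁻¹ * C₂
      - 2 * C₁⁻¹ * (deriv (deriv φ) u / deriv φ u) * b') v = _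
    rw [e]; ring
  intro u v
  have hcomm : pd1 (pd2 f) u v = pd2 (pd1 f) u v := pd_comm hfi u v
  have main : 2 * Dut φ (Ftil f φ C₁ C₂) u v -
      Vtil φ C₁ u v * Dut φ (Dvt φ C₁ (Ftil f φ C₁ C₂)) u v
      = (C₁ ^ 2)⁻¹ * Srel f u v +
        (C₁ ^ 2)⁻¹ * (deriv (deriv φ) u / deriv φ u) * Wrel f u v := by
    simp only [Dut, Vtil, Srel, Wrel]
    rw [pd1F u v, pd2F u v, pd1G u v, pd2G u v, hcomm]
    have ha : deriv φ u ≠ 0 := hφ' u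
    set a := deriv φ u
    set b := deriv (deriv φ) u
    set c := deriv (deriv (deriv φ)) u
    set F0 := f u v
    set F1 := pd1 f u v
    set F2 := pd2 f u v
    set F22 := pd2 (pd2 f) u v
    set F21 := pd2 (pd1 f) u v
    field_simp
    ring
  exact ⟨main, fun hW => by rw [main, hW, mul_zero, add_zero]⟩
end
end

section
/- Fix a smooth function f of (u,v) with W := 2f − 2v f_v + v² f_vv ≠ 0 and v ≠ 0 at a point. The normalization conditions ṽ = 1, f̃ = 1, f̃_ṽ = 0, f̃_ṽṽ = 0 (with ũ=φ(u), ṽ=φ'v/C₁, f̃ = C₁⁻²(φ'f − C₂φ'v − φ''v²) and derivatives via implicit differentiation operators) uniquely determine C₁ = W/(2v), C₂ = f_v − v f_vv, φ' = W/(2v²), φ'' = (W/(4v²)) f_vv. -/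
noncomputable section

/-- in the regular case W ≠ 0, v ≠ 0, the normalization conditions
ṽ = 1, f̃ = 1, f̃_ṽ = 0, f̃_ṽṽ = 0 hold if and only if
C₁ = W/(2v), C₂ = f_v − v f_vv, φ' = W/(2v²), φ'' = (W/(4v²)) f_vv.
Here `a`, `b` stand for the pointwise values φ'(u₀), φ''(u₀), and the transformed
quantities are expressed through these values via the implicit differentiation operators. -/
theorem statement7
    (f : ℝ → ℝ → ℝ) (hf : Smooth2 f)
    (u₀ v₀ : ℝ) (hv : v₀ ≠ 0) (hW : Wrel f u₀ v₀ ≠ 0)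
    (c₁ c₂ a b : ℝ) (hc₁ : c₁ ≠ 0) (ha : a ≠ 0) :
    (a * v₀ / c₁ = 1 ∧
     (c₁ ^ 2)⁻¹ * (a * f u₀ v₀ - c₂ * a * v₀ - b * v₀ ^ 2) = 1 ∧
     (c₁ * a)⁻¹ * (a * pd2 f u₀ v₀ - c₂ * a - 2 * b * v₀) = 0 ∧
     (a ^ 2)⁻¹ * (a * pd2 (pd2 f) u₀ v₀ - 2 * b) = 0)
    ↔
    (c₁ = Wrel f u₀ v₀ / (2 * v₀) ∧
     c₂ = pd2 f u₀ v₀ - v₀ * pd2 (pd2 f) u₀ v₀ ∧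
     a = Wrel f u₀ v₀ / (2 * v₀ ^ 2) ∧
     b = Wrel f u₀ v₀ / (4 * v₀ ^ 2) * pd2 (pd2 f) u₀ v₀) := by
  set F := f u₀ v₀ with hF
  set P := pd2 f u₀ v₀ with hP
  set Q := pd2 (pd2 f) u₀ v₀ with hQ
  have hWdef : Wrel f u₀ v₀ = 2 * F - 2 * v₀ * P + v₀ ^ 2 * Q := rfl
  rw [hWdef] at hW ⊢
  have h2v : (2 : ℝ) * v₀ ≠ 0 := mul_ne_zero two_ne_zero hv
  have h2v2 : (2 : ℝ) * v₀ ^ 2 ≠ 0 := mul_ne_zero two_ne_zero (pow_ne_zero 2 hv)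
  have h4v2 : (4 : ℝ) * v₀ ^ 2 ≠ 0 := mul_ne_zero four_ne_zero (pow_ne_zero 2 hv)
  constructor
  · rintro ⟨h1, h2, h3, h4⟩
    have e1 : a * v₀ = c₁ := by
      field_simp at h1; linarith
    have e4 : a * Q - 2 * b = 0 :=
      (mul_eq_zero.mp h4).resolve_left (inv_ne_zero (pow_ne_zero 2 ha))
    have e3 : a * P - c₂ * a - 2 * b * v₀ = 0 :=
      (mul_eq_zero.mp h3).resolve_left (inv_ne_zero (mul_ne_zero hc₁ ha))
    have e2 : a * F - c₂ * a * v₀ - b * v₀ ^ 2 = c₁ ^ 2 := by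
      field_simp at h2; linarith
    have ec₂ : c₂ = P - v₀ * Q :=
      mul_left_cancel₀ ha (by linear_combination -e3 + v₀ * e4)
    have key : c₁ * (c₁ * (2 * v₀)) = c₁ * (2 * F - 2 * v₀ * P + v₀ ^ 2 * Q) := by
      linear_combination (-2 * v₀) * e2 + (2 * F - 2 * v₀ * P + v₀ ^ 2 * Q) * e1 +
        (-2 * a * v₀ ^ 2) * ec₂ + v₀ ^ 3 * e4
    have key' : c₁ * (2 * v₀) = 2 * F - 2 * v₀ * P + v₀ ^ 2 * Q :=
      mul_left_cancel₀ hc₁ key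
    have ec₁ : c₁ = (2 * F - 2 * v₀ * P + v₀ ^ 2 * Q) / (2 * v₀) := by
      rw [eq_div_iff h2v]; exact key'
    have ea : a = (2 * F - 2 * v₀ * P + v₀ ^ 2 * Q) / (2 * v₀ ^ 2) := by
      rw [eq_div_iff h2v2]; linear_combination 2 * v₀ * e1 + key'
    have eb : b = (2 * F - 2 * v₀ * P + v₀ ^ 2 * Q) / (4 * v₀ ^ 2) * Q := by
      rw [div_mul_eq_mul_div, eq_div_iff h4v2]
      have ea' : a * (2 * v₀ ^ 2) = 2 * F - 2 * v₀ * P + v₀ ^ 2 * Q := by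
        rw [ea]; field_simp
      linear_combination (-2 * v₀ ^ 2) * e4 + Q * ea'
    exact ⟨ec₁, ec₂, ea, eb⟩
  · rintro ⟨ec₁, ec₂, ea, eb⟩
    subst ec₁ ec₂ ea eb
    refine ⟨?_, ?_, ?_, ?_⟩
    · rw [div_eq_one_iff_eq hc₁]; field_simp
    · rw [inv_mul_eq_one₀ (pow_ne_zero 2 hc₁)]; field_simp; ring
    · have hz : (2 * F - 2 * v₀ * P + v₀ ^ 2 * Q) / (2 * v₀ ^ 2) * P -
          (P - v₀ * Q) * ((2 * F - 2 * v₀ * P + v₀ ^ 2 * Q) / (2 * v₀ ^ 2)) -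
          2 * ((2 * F - 2 * v₀ * P + v₀ ^ 2 * Q) / (4 * v₀ ^ 2) * Q) * v₀ = 0 := by
        field_simp; ring
      rw [hz, mul_zero]
    · have hz : (2 * F - 2 * v₀ * P + v₀ ^ 2 * Q) / (2 * v₀ ^ 2) * Q -
          2 * ((2 * F - 2 * v₀ * P + v₀ ^ 2 * Q) / (4 * v₀ ^ 2) * Q) = 0 := by
        field_simp; ring
      rw [hz, mul_zero]
end
end

section
/- Let f be smooth in (u,v) with v ≠ 0 and W := 2f − 2v f_v + v² f_vv ≠ 0. Define I¹¹(f) = −2v² (4f_u − 2v f_uv + (2f − 2v f_v + v² f_vv) f_vv) / (2f − 2v f_v + v² f_vv)². Then I¹¹ is a differential invariant of the group G₁: for any equivalence transformation (ũ,ṽ,f̃) given by ũ=φ(u), ṽ=φ'v/C₁, f̃ = C₁⁻²(φ'f − C₂φ'v − φ''v²) with C₁φ'≠0, one has I¹¹(f̃)(ũ,ṽ) = I¹¹(f)(u,v), where derivatives of f̃ are computed with the implicit differentiation operators D_ũ, D_ṽ. -/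
noncomputable section

/-- The normalized differential invariant
I¹¹ = −2v²(4f_u − 2v f_uv + W f_vv)/W², where W = 2f − 2v f_v + v² f_vv. -/
def I11 (f : ℝ → ℝ → ℝ) : ℝ → ℝ → ℝ :=
  fun u v => -2 * v ^ 2 *
    (4 * pd1 f u v - 2 * v * pd2 (pd1 f) u v + Wrel f u v * pd2 (pd2 f) u v) /
    (Wrel f u v) ^ 2

section Aux

variable {f : ℝ → ℝ → ℝ} {φ : ℝ → ℝ}

lemma smooth2_fst (hf : Smooth2 f) (v : ℝ) : ContDiff ℝ (⊤ : ℕ∞) (fun u => f u v) :=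
  hf.comp (contDiff_id.prodMk contDiff_const)
lemma smooth2_snd (hf : Smooth2 f) (u : ℝ) : ContDiff ℝ (⊤ : ℕ∞) (fun v => f u v) :=
  hf.comp (contDiff_const.prodMk contDiff_id)

lemma pd1_eq_fderiv (hf : Smooth2 f) (u v : ℝ) :
    pd1 f u v = fderiv ℝ (fun p : ℝ × ℝ => f p.1 p.2) (u, v) (1, 0) := by
  have hc : HasDerivAt (fun u' : ℝ => (u', v)) ((1 : ℝ), (0 : ℝ)) u :=
    (hasDerivAt_id u).prodMk (hasDerivAt_const u v)
  exact ((hf.differentiable (by simp) (u, v)).hasFDerivAt.comp_hasDerivAt u hc).deriv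

lemma pd2_eq_fderiv (hf : Smooth2 f) (u v : ℝ) :
    pd2 f u v = fderiv ℝ (fun p : ℝ × ℝ => f p.1 p.2) (u, v) (0, 1) := by
  have hc : HasDerivAt (fun v' : ℝ => (u, v')) ((0 : ℝ), (1 : ℝ)) v :=
    (hasDerivAt_const v u).prodMk (hasDerivAt_id v)
  exact ((hf.differentiable (by simp) (u, v)).hasFDerivAt.comp_hasDerivAt v hc).deriv

lemma smooth2_pd1 (hf : Smooth2 f) : Smooth2 (pd1 f) := by
  have h : (fun p : ℝ × ℝ => pd1 f p.1 p.2)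
      = fun p => fderiv ℝ (fun q : ℝ × ℝ => f q.1 q.2) p ((1 : ℝ), (0 : ℝ)) := by
    funext p; exact pd1_eq_fderiv hf p.1 p.2
  rw [Smooth2, h]
  exact (ContinuousLinearMap.apply ℝ ℝ ((1 : ℝ), (0 : ℝ))).contDiff.comp (hf.fderiv_right (by simp))

lemma smooth2_pd2 (hf : Smooth2 f) : Smooth2 (pd2 f) := by
  have h : (fun p : ℝ × ℝ => pd2 f p.1 p.2)
      = fun p => fderiv ℝ (fun q : ℝ × ℝ => f q.1 q.2) p ((0 : ℝ), (1 : ℝ)) := by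
    funext p; exact pd2_eq_fderiv hf p.1 p.2
  rw [Smooth2, h]
  exact (ContinuousLinearMap.apply ℝ ℝ ((0 : ℝ), (1 : ℝ))).contDiff.comp (hf.fderiv_right (by simp))

lemma pd_comm_s9 (hf : Smooth2 f) (u v : ℝ) : pd1 (pd2 f) u v = pd2 (pd1 f) u v := by
  set G := fun p : ℝ × ℝ => f p.1 p.2 with hG
  have hd : ∀ y, HasFDerivAt G (fderiv ℝ G y) y :=
    fun y => (hf.differentiable (by simp) y).hasFDerivAt
  have h'' : HasFDerivAt (fderiv ℝ G) (fderiv ℝ (fderiv ℝ G) (u, v)) (u, v) :=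
    (((hf.fderiv_right (m := (⊤ : ℕ∞)) (by simp)).differentiable (by simp)) (u, v)).hasFDerivAt
  have hsym := second_derivative_symmetric hd h'' ((1 : ℝ), (0 : ℝ)) ((0 : ℝ), (1 : ℝ))
  have e1 : pd1 (pd2 f) u v = fderiv ℝ (fderiv ℝ G) (u, v) (1, 0) (0, 1) := by
    have H2 : (fun p : ℝ × ℝ => pd2 f p.1 p.2)
        = fun p => (ContinuousLinearMap.apply ℝ ℝ ((0 : ℝ), (1 : ℝ))) (fderiv ℝ G p) := by
      funext p; exact pd2_eq_fderiv hf p.1 p.2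
    have := pd1_eq_fderiv (smooth2_pd2 hf) u v
    rw [this, H2]
    have hcomp : HasFDerivAt
        (fun p => (ContinuousLinearMap.apply ℝ ℝ ((0 : ℝ), (1 : ℝ))) (fderiv ℝ G p))
        ((ContinuousLinearMap.apply ℝ ℝ ((0 : ℝ), (1 : ℝ))).comp (fderiv ℝ (fderiv ℝ G) (u, v)))
        (u, v) :=
      (ContinuousLinearMap.apply ℝ ℝ ((0 : ℝ), (1 : ℝ))).hasFDerivAt.comp (u, v) h''
    rw [hcomp.fderiv]; rfl
  have e2 : pd2 (pd1 f) u v = fderiv ℝ (fderiv ℝ G) (u, v) (0, 1) (1, 0) := by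
    have H1 : (fun p : ℝ × ℝ => pd1 f p.1 p.2)
        = fun p => (ContinuousLinearMap.apply ℝ ℝ ((1 : ℝ), (0 : ℝ))) (fderiv ℝ G p) := by
      funext p; exact pd1_eq_fderiv hf p.1 p.2
    have := pd2_eq_fderiv (smooth2_pd1 hf) u v
    rw [this, H1]
    have hcomp : HasFDerivAt
        (fun p => (ContinuousLinearMap.apply ℝ ℝ ((1 : ℝ), (0 : ℝ))) (fderiv ℝ G p))
        ((ContinuousLinearMap.apply ℝ ℝ ((1 : ℝ), (0 : ℝ))).comp (fderiv ℝ (fderiv ℝ G) (u, v)))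
        (u, v) :=
      (ContinuousLinearMap.apply ℝ ℝ ((1 : ℝ), (0 : ℝ))).hasFDerivAt.comp (u, v) h''
    rw [hcomp.fderiv]; rfl
  rw [e1, e2, hsym]

lemma hdf1 (hf : Smooth2 f) (u v : ℝ) : HasDerivAt (fun u' => f u' v) (pd1 f u v) u :=
  ((smooth2_fst hf v).differentiable (by simp) u).hasDerivAt
lemma hdf2 (hf : Smooth2 f) (u v : ℝ) : HasDerivAt (fun v' => f u v') (pd2 f u v) v :=
  ((smooth2_snd hf u).differentiable (by simp) v).hasDerivAt
lemma hdphi2 (hφ : ContDiff ℝ (⊤ : ℕ∞) φ) (u : ℝ) : HasDerivAt (deriv φ) (deriv (deriv φ) u) u := by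
  have h1 : ContDiff ℝ (⊤ : ℕ∞) (deriv φ) :=
    (contDiff_infty_iff_deriv.mp (hφ.of_le (by simp))).2
  exact (h1.differentiable (by simp) u).hasDerivAt
lemma hdphi3 (hφ : ContDiff ℝ (⊤ : ℕ∞) φ) (u : ℝ) :
    HasDerivAt (deriv (deriv φ)) (deriv (deriv (deriv φ)) u) u := by
  have h1 : ContDiff ℝ (⊤ : ℕ∞) (deriv φ) :=
    (contDiff_infty_iff_deriv.mp (hφ.of_le (by simp))).2
  have h2 : ContDiff ℝ (⊤ : ℕ∞) (deriv (deriv φ)) := (contDiff_infty_iff_deriv.mp h1).2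
  exact (h2.differentiable (by simp) u).hasDerivAt

lemma pd2_Ftil (hf : Smooth2 f) (C₁ C₂ : ℝ) (u v : ℝ) :
    pd2 (Ftil f φ C₁ C₂) u v
      = (C₁ ^ 2)⁻¹ * (deriv φ u * pd2 f u v - C₂ * deriv φ u - 2 * deriv (deriv φ) u * v) := by
  have H : HasDerivAt (fun v' => Ftil f φ C₁ C₂ u v')
      ((C₁ ^ 2)⁻¹ * (deriv φ u * pd2 f u v - C₂ * deriv φ u * 1
        - deriv (deriv φ) u * ((2 : ℕ) * v ^ (2 - 1)))) v := by
    exact ((((hdf2 hf u v).const_mul (deriv φ u)).sub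
      ((hasDerivAt_id v).const_mul (C₂ * deriv φ u))).sub
      ((hasDerivAt_pow 2 v).const_mul (deriv (deriv φ) u))).const_mul ((C₁ ^ 2)⁻¹)
  rw [pd2, H.deriv]; push_cast; ring

lemma pd1_Ftil (hf : Smooth2 f) (hφ : ContDiff ℝ (⊤ : ℕ∞) φ) (C₁ C₂ : ℝ) (u v : ℝ) :
    pd1 (Ftil f φ C₁ C₂) u v
      = (C₁ ^ 2)⁻¹ * (deriv (deriv φ) u * f u v + deriv φ u * pd1 f u v
        - C₂ * deriv (deriv φ) u * v - deriv (deriv (deriv φ)) u * v ^ 2) := by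
  have H : HasDerivAt (fun u' => Ftil f φ C₁ C₂ u' v)
      ((C₁ ^ 2)⁻¹ * ((deriv (deriv φ) u * f u v + deriv φ u * pd1 f u v)
        - (C₂ * deriv (deriv φ) u) * v - deriv (deriv (deriv φ)) u * v ^ 2)) u := by
    exact ((((hdphi2 hφ u).mul (hdf1 hf u v)).sub
      (((hdphi2 hφ u).const_mul C₂).mul_const v)).sub
      ((hdphi3 hφ u).mul_const (v ^ 2))).const_mul ((C₁ ^ 2)⁻¹)
  rw [pd1, H.deriv]

lemma heq_pd2_Ftil (hf : Smooth2 f) (C₁ C₂ : ℝ) :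
    pd2 (Ftil f φ C₁ C₂) = fun u v =>
      (C₁ ^ 2)⁻¹ * (deriv φ u * pd2 f u v - C₂ * deriv φ u - 2 * deriv (deriv φ) u * v) :=
  funext fun u => funext fun v => pd2_Ftil hf C₁ C₂ u v

lemma pd2_pd2_Ftil (hf : Smooth2 f) (C₁ C₂ : ℝ) (u v : ℝ) :
    pd2 (pd2 (Ftil f φ C₁ C₂)) u v
      = (C₁ ^ 2)⁻¹ * (deriv φ u * pd2 (pd2 f) u v - 2 * deriv (deriv φ) u) := by
  rw [heq_pd2_Ftil hf C₁ C₂]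
  have H : HasDerivAt (fun v' =>
      (C₁ ^ 2)⁻¹ * (deriv φ u * pd2 f u v' - C₂ * deriv φ u - 2 * deriv (deriv φ) u * v'))
      ((C₁ ^ 2)⁻¹ * (deriv φ u * pd2 (pd2 f) u v - 0 - 2 * deriv (deriv φ) u * 1)) v := by
    exact ((((hdf2 (smooth2_pd2 hf) u v).const_mul (deriv φ u)).sub
      (hasDerivAt_const v (C₂ * deriv φ u))).sub
      ((hasDerivAt_id v).const_mul (2 * deriv (deriv φ) u))).const_mul ((C₁ ^ 2)⁻¹)
  rw [pd2, H.deriv]; ring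

lemma pd1_pd2_Ftil (hf : Smooth2 f) (hφ : ContDiff ℝ (⊤ : ℕ∞) φ) (C₁ C₂ : ℝ) (u v : ℝ) :
    pd1 (pd2 (Ftil f φ C₁ C₂)) u v
      = (C₁ ^ 2)⁻¹ * (deriv (deriv φ) u * pd2 f u v + deriv φ u * pd1 (pd2 f) u v
        - C₂ * deriv (deriv φ) u - 2 * deriv (deriv (deriv φ)) u * v) := by
  rw [heq_pd2_Ftil hf C₁ C₂]
  have H : HasDerivAt (fun u' =>
      (C₁ ^ 2)⁻¹ * (deriv φ u' * pd2 f u' v - C₂ * deriv φ u' - 2 * deriv (deriv φ) u' * v))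
      ((C₁ ^ 2)⁻¹ * ((deriv (deriv φ) u * pd2 f u v + deriv φ u * pd1 (pd2 f) u v)
        - C₂ * deriv (deriv φ) u - (2 * deriv (deriv (deriv φ)) u) * v)) u := by
    exact ((((hdphi2 hφ u).mul (hdf1 (smooth2_pd2 hf) u v)).sub
      ((hdphi2 hφ u).const_mul C₂)).sub
      (((hdphi3 hφ u).const_mul 2).mul_const v)).const_mul ((C₁ ^ 2)⁻¹)
  rw [pd1, H.deriv]

lemma hDvtFtil (hf : Smooth2 f) (C₁ C₂ : ℝ) :
    Dvt φ C₁ (Ftil f φ C₁ C₂) = fun u v => C₁ / deriv φ u *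
      ((C₁ ^ 2)⁻¹ * (deriv φ u * pd2 f u v - C₂ * deriv φ u - 2 * deriv (deriv φ) u * v)) := by
  funext x y
  rw [show Dvt φ C₁ (Ftil f φ C₁ C₂) x y = C₁ / deriv φ x * pd2 (Ftil f φ C₁ C₂) x y from rfl,
    pd2_Ftil hf C₁ C₂ x y]

lemma pd2_DvtFtil (hf : Smooth2 f) (C₁ C₂ : ℝ) (u v : ℝ) :
    pd2 (Dvt φ C₁ (Ftil f φ C₁ C₂)) u v
      = C₁ / deriv φ u * ((C₁ ^ 2)⁻¹ * (deriv φ u * pd2 (pd2 f) u v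
        - 2 * deriv (deriv φ) u)) := by
  rw [hDvtFtil hf C₁ C₂]
  have H : HasDerivAt (fun v' => C₁ / deriv φ u *
      ((C₁ ^ 2)⁻¹ * (deriv φ u * pd2 f u v' - C₂ * deriv φ u - 2 * deriv (deriv φ) u * v')))
      (C₁ / deriv φ u *
        ((C₁ ^ 2)⁻¹ * (deriv φ u * pd2 (pd2 f) u v - 0 - 2 * deriv (deriv φ) u * 1))) v := by
    exact (((((hdf2 (smooth2_pd2 hf) u v).const_mul (deriv φ u)).sub
      (hasDerivAt_const v (C₂ * deriv φ u))).sub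
      ((hasDerivAt_id v).const_mul (2 * deriv (deriv φ) u))).const_mul
        ((C₁ ^ 2)⁻¹)).const_mul (C₁ / deriv φ u)
  rw [pd2, H.deriv]; ring

lemma pd1_DvtFtil (hf : Smooth2 f) (hφ : ContDiff ℝ (⊤ : ℕ∞) φ) (C₁ C₂ : ℝ)
    (hφ' : ∀ s : ℝ, deriv φ s ≠ 0) (u v : ℝ) :
    pd1 (Dvt φ C₁ (Ftil f φ C₁ C₂)) u v
      = (0 * deriv φ u - C₁ * deriv (deriv φ) u) / deriv φ u ^ 2 *
          ((C₁ ^ 2)⁻¹ * (deriv φ u * pd2 f u v - C₂ * deriv φ u - 2 * deriv (deriv φ) u * v))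
        + C₁ / deriv φ u *
          ((C₁ ^ 2)⁻¹ * ((deriv (deriv φ) u * pd2 f u v + deriv φ u * pd1 (pd2 f) u v)
            - C₂ * deriv (deriv φ) u - (2 * deriv (deriv (deriv φ)) u) * v)) := by
  rw [hDvtFtil hf C₁ C₂]
  have Hq : HasDerivAt (fun u' => C₁ / deriv φ u')
      ((0 * deriv φ u - C₁ * deriv (deriv φ) u) / deriv φ u ^ 2) u :=
    (hasDerivAt_const u C₁).div (hdphi2 hφ u) (hφ' u)
  have HG : HasDerivAt (fun u' =>
      (C₁ ^ 2)⁻¹ * (deriv φ u' * pd2 f u' v - C₂ * deriv φ u' - 2 * deriv (deriv φ) u' * v))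
      ((C₁ ^ 2)⁻¹ * ((deriv (deriv φ) u * pd2 f u v + deriv φ u * pd1 (pd2 f) u v)
        - C₂ * deriv (deriv φ) u - (2 * deriv (deriv (deriv φ)) u) * v)) u := by
    exact ((((hdphi2 hφ u).mul (hdf1 (smooth2_pd2 hf) u v)).sub
      ((hdphi2 hφ u).const_mul C₂)).sub
      (((hdphi3 hφ u).const_mul 2).mul_const v)).const_mul ((C₁ ^ 2)⁻¹)
  have H := Hq.mul HG
  rw [pd1]; exact H.deriv

end Aux

/-- I¹¹ is a differential invariant of the projected equivalence group G₁:
its value computed from f̃ and the implicit derivatives at (ũ,ṽ) coincides with its value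
computed from f at (u,v). -/
theorem statement9
    (f : ℝ → ℝ → ℝ) (hf : Smooth2 f)
    (φ : ℝ → ℝ) (hφ : ContDiff ℝ (⊤ : ℕ∞) φ)
    (C₁ C₂ : ℝ) (hC₁ : C₁ ≠ 0) (hφ' : ∀ s : ℝ, deriv φ s ≠ 0) :
    ∀ u v : ℝ, v ≠ 0 → Wrel f u v ≠ 0 →
      (-2) * (Vtil φ C₁ u v) ^ 2 *
        (4 * Dut φ (Ftil f φ C₁ C₂) u v -
         2 * Vtil φ C₁ u v * Dut φ (Dvt φ C₁ (Ftil f φ C₁ C₂)) u v +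
         (2 * Ftil f φ C₁ C₂ u v -
          2 * Vtil φ C₁ u v * Dvt φ C₁ (Ftil f φ C₁ C₂) u v +
          (Vtil φ C₁ u v) ^ 2 * Dvt φ C₁ (Dvt φ C₁ (Ftil f φ C₁ C₂)) u v) *
          Dvt φ C₁ (Dvt φ C₁ (Ftil f φ C₁ C₂)) u v) /
        (2 * Ftil f φ C₁ C₂ u v -
         2 * Vtil φ C₁ u v * Dvt φ C₁ (Ftil f φ C₁ C₂) u v +
         (Vtil φ C₁ u v) ^ 2 * Dvt φ C₁ (Dvt φ C₁ (Ftil f φ C₁ C₂)) u v) ^ 2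
      = I11 f u v := by
  intro u v hv hW
  have ha : deriv φ u ≠ 0 := hφ' u
  have hW' : 2 * f u v - 2 * v * pd2 f u v + v ^ 2 * pd2 (pd2 f) u v ≠ 0 := hW
  have hcomm := pd_comm_s9 hf u v
  have e1 : Dut φ (Ftil f φ C₁ C₂) u v
      = (deriv φ u)⁻¹ * pd1 (Ftil f φ C₁ C₂) u v -
        deriv (deriv φ) u / (deriv φ u) ^ 2 * v * pd2 (Ftil f φ C₁ C₂) u v := rfl
  have e2 : Dut φ (Dvt φ C₁ (Ftil f φ C₁ C₂)) u v
      = (deriv φ u)⁻¹ * pd1 (Dvt φ C₁ (Ftil f φ C₁ C₂)) u v -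
        deriv (deriv φ) u / (deriv φ u) ^ 2 * v * pd2 (Dvt φ C₁ (Ftil f φ C₁ C₂)) u v := rfl
  have e3 : Dvt φ C₁ (Ftil f φ C₁ C₂) u v
      = C₁ / deriv φ u * pd2 (Ftil f φ C₁ C₂) u v := rfl
  have e4 : Dvt φ C₁ (Dvt φ C₁ (Ftil f φ C₁ C₂)) u v
      = C₁ / deriv φ u * pd2 (Dvt φ C₁ (Ftil f φ C₁ C₂)) u v := rfl
  have e5 : Vtil φ C₁ u v = deriv φ u * v / C₁ := rfl
  have e6 : Ftil f φ C₁ C₂ u v = (C₁ ^ 2)⁻¹ *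
      (deriv φ u * f u v - C₂ * deriv φ u * v - deriv (deriv φ) u * v ^ 2) := rfl
  rw [e1, e2, e3, e4, e5, e6, pd1_DvtFtil hf hφ C₁ C₂ hφ' u v, pd2_DvtFtil hf C₁ C₂ u v,
    pd1_Ftil hf hφ C₁ C₂ u v, pd2_Ftil hf C₁ C₂ u v]
  simp only [I11, Wrel]
  rw [← hcomm]
  set a := deriv φ u with hA
  set b := deriv (deriv φ) u with hB
  set c := deriv (deriv (deriv φ)) u with hC
  set F := f u v with hF
  set Fu := pd1 f u v with hFu
  set Fv := pd2 f u v with hFv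
  set Fvv := pd2 (pd2 f) u v with hFvv
  set Fuv := pd1 (pd2 f) u v with hFuv
  have hD : 2 * ((C₁ ^ 2)⁻¹ * (a * F - C₂ * a * v - b * v ^ 2)) -
      2 * (a * v / C₁) * (C₁ / a * ((C₁ ^ 2)⁻¹ * (a * Fv - C₂ * a - 2 * b * v))) +
      (a * v / C₁) ^ 2 * (C₁ / a * (C₁ / a * ((C₁ ^ 2)⁻¹ * (a * Fvv - 2 * b))))
      = a * (2 * F - 2 * v * Fv + v ^ 2 * Fvv) / C₁ ^ 2 := by
    field_simp
    ring
  rw [hD]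
  have hfrac : a * (2 * F - 2 * v * Fv + v ^ 2 * Fvv) / C₁ ^ 2 ≠ 0 :=
    div_ne_zero (mul_ne_zero ha hW') (pow_ne_zero _ hC₁)
  rw [div_eq_div_iff (pow_ne_zero 2 hfrac) (pow_ne_zero 2 hW')]
  field_simp
  ring
end
end

section
/- Let f be smooth in (u,v) with v ≠ 0 and W := 2f − 2v f_v + v² f_vv ≠ 0. Define I⁰³(f) = 2v³ f_vvv / W. Then I⁰³ is invariant under the transformations ũ=φ(u), ṽ=φ'v/C₁, f̃ = C₁⁻²(φ'f − C₂φ'v − φ''v²): I⁰³(f̃)(ũ,ṽ) = I⁰³(f)(u,v), where f̃_ṽṽṽ = D_ṽ³ f̃ with D_ṽ = (C₁/φ')D_v. -/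
noncomputable section

/-- The normalized differential invariant I⁰³ = 2v³ f_vvv / W. -/
def I03 (f : ℝ → ℝ → ℝ) : ℝ → ℝ → ℝ :=
  fun u v => 2 * v ^ 3 * pd2 (pd2 (pd2 f)) u v / Wrel f u v

/-- I⁰³ = 2v³ f_vvv / W is a differential invariant of G₁:
2ṽ³ f̃_ṽṽṽ / W̃ computed via the implicit differentiation operators equals 2v³ f_vvv / W. -/
theorem statement10
    (f : ℝ → ℝ → ℝ) (hf : Smooth2 f)
    (φ : ℝ → ℝ) (hφ : ContDiff ℝ (⊤ : ℕ∞) φ)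
    (C₁ C₂ : ℝ) (hC₁ : C₁ ≠ 0) (hφ' : ∀ s : ℝ, deriv φ s ≠ 0) :
    ∀ u v : ℝ, v ≠ 0 → Wrel f u v ≠ 0 →
      2 * (Vtil φ C₁ u v) ^ 3 *
        Dvt φ C₁ (Dvt φ C₁ (Dvt φ C₁ (Ftil f φ C₁ C₂))) u v /
        (2 * Ftil f φ C₁ C₂ u v -
         2 * Vtil φ C₁ u v * Dvt φ C₁ (Ftil f φ C₁ C₂) u v +
         (Vtil φ C₁ u v) ^ 2 * Dvt φ C₁ (Dvt φ C₁ (Ftil f φ C₁ C₂)) u v)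
      = I03 f u v := by
  intro u v hv hW
  have haz : deriv φ u ≠ 0 := hφ' u
  -- one-variable slice
  set g : ℝ → ℝ := fun w => f u w with hgdef
  have hgc : ContDiff ℝ (⊤ : ℕ∞) g := hf.comp ((contDiff_const (c := u)).prodMk contDiff_id)
  have hgc' : ContDiff ℝ (⊤ : ℕ∞) g := hgc.of_le (by simp)
  have h1 := contDiff_infty_iff_deriv.mp hgc'
  have h2 := contDiff_infty_iff_deriv.mp h1.2
  have h3 := contDiff_infty_iff_deriv.mp h2.2
  set a := deriv φ u with hadef
  set b := deriv (deriv φ) u with hbdef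
  set K := (C₁ ^ 2)⁻¹ with hKdef
  set c := C₁ / a with hcdef
  -- first derivative of Ftil in v
  have hd1 : ∀ w : ℝ, HasDerivAt (fun w' => Ftil f φ C₁ C₂ u w')
      (K * (a * deriv g w - C₂ * a - b * (2 * w))) w := by
    intro w
    have hgd : HasDerivAt g (deriv g w) w := (h1.1 w).hasDerivAt
    have t1 : HasDerivAt (fun w' => a * g w') (a * deriv g w) w := hgd.const_mul a
    have t2 : HasDerivAt (fun w' : ℝ => C₂ * a * w') (C₂ * a) w := by
      simpa using (hasDerivAt_id w).const_mul (C₂ * a)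
    have t3 : HasDerivAt (fun w' : ℝ => b * w' ^ 2) (b * (2 * w)) w := by
      simpa using (hasDerivAt_pow 2 w).const_mul b
    exact ((t1.sub t2).sub t3).const_mul K
  have hpF : ∀ w : ℝ, pd2 (Ftil f φ C₁ C₂) u w
      = K * (a * deriv g w - C₂ * a - b * (2 * w)) := fun w => (hd1 w).deriv
  have hD1 : ∀ w : ℝ, Dvt φ C₁ (Ftil f φ C₁ C₂) u w
      = c * (K * (a * deriv g w - C₂ * a - b * (2 * w))) := by
    intro w; show C₁ / a * pd2 (Ftil f φ C₁ C₂) u w = _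
    rw [hpF w]
  -- second derivative
  have hd2 : ∀ w : ℝ, HasDerivAt (fun w' => Dvt φ C₁ (Ftil f φ C₁ C₂) u w')
      (c * (K * (a * deriv (deriv g) w - 0 - b * 2))) w := by
    intro w
    have heq : (fun w' => Dvt φ C₁ (Ftil f φ C₁ C₂) u w')
        = fun w' => c * (K * (a * deriv g w' - C₂ * a - b * (2 * w'))) := funext hD1
    rw [heq]
    have hdg : HasDerivAt (deriv g) (deriv (deriv g) w) w := (h2.1 w).hasDerivAt
    have s1 : HasDerivAt (fun w' => a * deriv g w') (a * deriv (deriv g) w) w := hdg.const_mul a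
    have s2 : HasDerivAt (fun _ : ℝ => C₂ * a) (0 : ℝ) w := hasDerivAt_const w _
    have s3 : HasDerivAt (fun w' : ℝ => b * (2 * w')) (b * 2) w := by
      simpa using ((hasDerivAt_id w).const_mul (2 : ℝ)).const_mul b
    exact (((s1.sub s2).sub s3).const_mul K).const_mul c
  have hD2 : ∀ w : ℝ, Dvt φ C₁ (Dvt φ C₁ (Ftil f φ C₁ C₂)) u w
      = c * (c * (K * (a * deriv (deriv g) w - 0 - b * 2))) := by
    intro w
    show C₁ / a * pd2 (Dvt φ C₁ (Ftil f φ C₁ C₂)) u w = _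
    have : pd2 (Dvt φ C₁ (Ftil f φ C₁ C₂)) u w
        = c * (K * (a * deriv (deriv g) w - 0 - b * 2)) := (hd2 w).deriv
    rw [this]
  -- third derivative
  have hd3 : ∀ w : ℝ, HasDerivAt (fun w' => Dvt φ C₁ (Dvt φ C₁ (Ftil f φ C₁ C₂)) u w')
      (c * (c * (K * (a * deriv (deriv (deriv g)) w - 0 - 0)))) w := by
    intro w
    have heq : (fun w' => Dvt φ C₁ (Dvt φ C₁ (Ftil f φ C₁ C₂)) u w')
        = fun w' => c * (c * (K * (a * deriv (deriv g) w' - 0 - b * 2))) := funext hD2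
    rw [heq]
    have hdg : HasDerivAt (deriv (deriv g)) (deriv (deriv (deriv g)) w) w := (h3.1 w).hasDerivAt
    have r1 : HasDerivAt (fun w' => a * deriv (deriv g) w')
        (a * deriv (deriv (deriv g)) w) w := hdg.const_mul a
    have r2 : HasDerivAt (fun _ : ℝ => (0 : ℝ)) (0 : ℝ) w := hasDerivAt_const w _
    have r3 : HasDerivAt (fun _ : ℝ => b * 2) (0 : ℝ) w := hasDerivAt_const w _
    exact ((((r1.sub r2).sub r3).const_mul K).const_mul c).const_mul c
  have hD3 : Dvt φ C₁ (Dvt φ C₁ (Dvt φ C₁ (Ftil f φ C₁ C₂))) u v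
      = c * (c * (c * (K * (a * deriv (deriv (deriv g)) v - 0 - 0)))) := by
    show C₁ / a * pd2 (Dvt φ C₁ (Dvt φ C₁ (Ftil f φ C₁ C₂))) u v = _
    have : pd2 (Dvt φ C₁ (Dvt φ C₁ (Ftil f φ C₁ C₂))) u v
        = c * (c * (K * (a * deriv (deriv (deriv g)) v - 0 - 0))) := (hd3 v).deriv
    rw [this]
  -- base facts
  have hFv : Ftil f φ C₁ C₂ u v = K * (a * g v - C₂ * a * v - b * v ^ 2) := rfl
  have hVt : Vtil φ C₁ u v = a * v / C₁ := rfl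
  have hWr : Wrel f u v = 2 * g v - 2 * v * deriv g v + v ^ 2 * deriv (deriv g) v := rfl
  have hI : I03 f u v = 2 * v ^ 3 * deriv (deriv (deriv g)) v / Wrel f u v := rfl
  have hW' : 2 * g v - 2 * v * deriv g v + v ^ 2 * deriv (deriv g) v ≠ 0 := hWr ▸ hW
  have hKa : K * a ≠ 0 := mul_ne_zero (inv_ne_zero (pow_ne_zero 2 hC₁)) haz
  have hnum : 2 * (a * v / C₁) ^ 3 *
      (c * (c * (c * (K * (a * deriv (deriv (deriv g)) v - 0 - 0)))))
      = K * a * (2 * v ^ 3 * deriv (deriv (deriv g)) v) := by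
    rw [hcdef, hKdef]; field_simp; ring
  have hden : 2 * (K * (a * g v - C₂ * a * v - b * v ^ 2)) -
      2 * (a * v / C₁) * (c * (K * (a * deriv g v - C₂ * a - b * (2 * v)))) +
      (a * v / C₁) ^ 2 * (c * (c * (K * (a * deriv (deriv g) v - 0 - b * 2))))
      = K * a * (2 * g v - 2 * v * deriv g v + v ^ 2 * deriv (deriv g) v) := by
    rw [hcdef, hKdef]; field_simp; ring
  rw [hI, hWr, hD3, hD2 v, hD1 v, hFv, hVt, hnum, hden,
    mul_div_mul_left _ _ hKa]
end
end

section
/- Define the operators Dᵘⁱ = (2v²/W)(D_u − (1/2)v f_vv D_v) and Dᵛⁱ = v D_v, acting on smooth functions of (u,v), where W = 2f − 2v f_v + v² f_vv ≠ 0. Then Dᵘⁱ and Dᵛⁱ are operators of invariant differentiation for G₁: if I is a differential invariant of G₁, then so are Dᵘⁱ I and Dᵛⁱ I. Equivalently, under any transformation ũ=φ(u), ṽ=φ'v/C₁, f̃ = C₁⁻²(φ'f−C₂φ'v−φ''v²), the transformed operators D̃ᵘⁱ, D̃ᵛⁱ (built from f̃ and the implicit differentiation operators D_ũ, D_ṽ)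 coincide with Dᵘⁱ, Dᵛⁱ as operators on functions of (u,v). -/
noncomputable section

/-- The operator of invariant differentiation Dᵘⁱ = (2v²/W)(D_u − (1/2) v f_vv D_v). -/
def DuInv (f : ℝ → ℝ → ℝ) (g : ℝ → ℝ → ℝ) : ℝ → ℝ → ℝ :=
  fun u v => 2 * v ^ 2 / Wrel f u v *
    (pd1 g u v - (1 / 2) * v * pd2 (pd2 f) u v * pd2 g u v)

/-- The operator of invariant differentiation Dᵛⁱ = v D_v. -/
def DvInv (g : ℝ → ℝ → ℝ) : ℝ → ℝ → ℝ := fun u v => v * pd2 g u v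

/-- Dᵘⁱ and Dᵛⁱ are operators of invariant differentiation for G₁: the
corresponding operators built from f̃, ṽ, W̃ and the implicit differentiation operators
D_ũ, D_ṽ coincide with Dᵘⁱ, Dᵛⁱ as operators on functions of (u,v). -/
theorem statement11
    (f : ℝ → ℝ → ℝ) (hf : Smooth2 f)
    (φ : ℝ → ℝ) (hφ : ContDiff ℝ (⊤ : ℕ∞) φ)
    (C₁ C₂ : ℝ) (hC₁ : C₁ ≠ 0) (hφ' : ∀ s : ℝ, deriv φ s ≠ 0) :
    ∀ g : ℝ → ℝ → ℝ, Smooth2 g →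
    ∀ u v : ℝ, v ≠ 0 → Wrel f u v ≠ 0 →
      (2 * (Vtil φ C₁ u v) ^ 2 /
        (2 * Ftil f φ C₁ C₂ u v -
         2 * Vtil φ C₁ u v * Dvt φ C₁ (Ftil f φ C₁ C₂) u v +
         (Vtil φ C₁ u v) ^ 2 * Dvt φ C₁ (Dvt φ C₁ (Ftil f φ C₁ C₂)) u v) *
        (Dut φ g u v -
         (1 / 2) * Vtil φ C₁ u v * Dvt φ C₁ (Dvt φ C₁ (Ftil f φ C₁ C₂)) u v *
           Dvt φ C₁ g u v)
        = DuInv f g u v) ∧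
      (Vtil φ C₁ u v * Dvt φ C₁ g u v = DvInv g u v) := by
  intro g hg u v hv hW
  have hA := hφ' u
  -- smoothness of f in the second variable
  have hf1 : ContDiff ℝ (⊤ : ℕ∞) (fun w : ℝ => f u w) :=
    hf.comp (contDiff_const.prodMk contDiff_id)
  have hdf : Differentiable ℝ (fun w : ℝ => f u w) := hf1.differentiable (by simp)
  have hdfv : Differentiable ℝ (fun w : ℝ => pd2 f u w) := by
    have hf1' : ContDiff ℝ ((⊤ : ℕ∞) : WithTop ℕ∞) (fun w : ℝ => f u w) := hf1.of_le (by simp)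
    have h := ((contDiff_infty_iff_deriv).1 hf1').2.differentiable (by simp)
    exact h
  have key1 : ∀ w : ℝ, pd2 (Ftil f φ C₁ C₂) u w
      = (C₁ ^ 2)⁻¹ * (deriv φ u * pd2 f u w - C₂ * deriv φ u
          - deriv (deriv φ) u * (2 * w)) := by
    intro w
    have hfd : HasDerivAt (fun w' : ℝ => f u w') (pd2 f u w) w := (hdf w).hasDerivAt
    have h2 : HasDerivAt (fun w' : ℝ => C₂ * deriv φ u * w') (C₂ * deriv φ u) w := by
      simpa using (hasDerivAt_id w).const_mul (C₂ * deriv φ u)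
    have h3 : HasDerivAt (fun w' : ℝ => deriv (deriv φ) u * w' ^ 2)
        (deriv (deriv φ) u * (2 * w)) w := by
      simpa [mul_comm, mul_assoc] using (hasDerivAt_pow 2 w).const_mul (deriv (deriv φ) u)
    have h := (((hfd.const_mul (deriv φ u)).sub h2).sub h3).const_mul ((C₁ ^ 2)⁻¹)
    simp only [pd2, Ftil]
    exact h.deriv
  have key2 : pd2 (Dvt φ C₁ (Ftil f φ C₁ C₂)) u v
      = C₁ / deriv φ u * ((C₁ ^ 2)⁻¹ *
          (deriv φ u * pd2 (pd2 f) u v - deriv (deriv φ) u * 2)) := by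
    have hfun : (fun w : ℝ => Dvt φ C₁ (Ftil f φ C₁ C₂) u w)
        = fun w : ℝ => C₁ / deriv φ u * ((C₁ ^ 2)⁻¹ *
            (deriv φ u * pd2 f u w - C₂ * deriv φ u
              - deriv (deriv φ) u * (2 * w))) := by
      funext w
      simp only [Dvt]
      rw [key1 w]
    have hfd : HasDerivAt (fun w : ℝ => pd2 f u w) (pd2 (pd2 f) u v) v :=
      (hdfv v).hasDerivAt
    have h3 : HasDerivAt (fun w : ℝ => deriv (deriv φ) u * (2 * w))
        (deriv (deriv φ) u * 2) v := by
      have h2 : HasDerivAt (fun w : ℝ => (2 : ℝ) * w) 2 v := by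
        simpa using (hasDerivAt_id v).const_mul (2 : ℝ)
      exact h2.const_mul (deriv (deriv φ) u)
    have h := (((((hfd.const_mul (deriv φ u)).sub_const
        (C₂ * deriv φ u)).sub h3).const_mul ((C₁ ^ 2)⁻¹)).const_mul (C₁ / deriv φ u))
    simp only [pd2]
    rw [show (fun b' : ℝ => Dvt φ C₁ (Ftil f φ C₁ C₂) u b')
        = (fun w : ℝ => Dvt φ C₁ (Ftil f φ C₁ C₂) u w) from rfl, hfun]
    exact h.deriv
  have hdvt1 : Dvt φ C₁ (Ftil f φ C₁ C₂) u v
      = C₁ / deriv φ u * ((C₁ ^ 2)⁻¹ * (deriv φ u * pd2 f u v - C₂ * deriv φ u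
          - deriv (deriv φ) u * (2 * v))) := by
    simp only [Dvt]; rw [key1 v]
  have hdvt2 : Dvt φ C₁ (Dvt φ C₁ (Ftil f φ C₁ C₂)) u v
      = C₁ / deriv φ u * (C₁ / deriv φ u * ((C₁ ^ 2)⁻¹ *
          (deriv φ u * pd2 (pd2 f) u v - deriv (deriv φ) u * 2))) := by
    simp only [Dvt]; rw [key2]
  simp only [Wrel] at hW
  constructor
  · rw [hdvt1, hdvt2]
    simp only [DuInv, Wrel, Vtil, Ftil, Dut, Dvt]
    have hden : 2 * ((C₁ ^ 2)⁻¹ * (deriv φ u * f u v - C₂ * deriv φ u * v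
          - deriv (deriv φ) u * v ^ 2))
        - 2 * (deriv φ u * v / C₁) * (C₁ / deriv φ u * ((C₁ ^ 2)⁻¹ *
            (deriv φ u * pd2 f u v - C₂ * deriv φ u - deriv (deriv φ) u * (2 * v))))
        + (deriv φ u * v / C₁) ^ 2 * (C₁ / deriv φ u * (C₁ / deriv φ u * ((C₁ ^ 2)⁻¹ *
            (deriv φ u * pd2 (pd2 f) u v - deriv (deriv φ) u * 2))))
        = (C₁ ^ 2)⁻¹ * deriv φ u *
            (2 * f u v - 2 * v * pd2 f u v + v ^ 2 * pd2 (pd2 f) u v) := by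
      field_simp
      ring
    rw [hden]
    have hden' : (C₁ ^ 2)⁻¹ * deriv φ u *
        (2 * f u v - 2 * v * pd2 f u v + v ^ 2 * pd2 (pd2 f) u v) ≠ 0 := by
      apply mul_ne_zero (mul_ne_zero (by positivity) hA) hW
    field_simp
    ring
  · simp only [DvInv, Vtil, Dvt]
    field_simp
end
end

section
/- Let Dᵘⁱ = (2v²/W)(D_u − (1/2)v f_vv D_v) and Dᵛⁱ = v D_v with W = 2f − 2v f_v + v² f_vv ≠ 0, acting as total differentiation combinations on differential functions of f(u,v). Then their commutator satisfies [Dᵘⁱ, Dᵛⁱ] = ((1/2)I⁰³ − 2)Dᵘⁱ + (1/2)I⁰³ Dᵛⁱ, where I⁰³ = 2v³ f_vvv / W. -/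
noncomputable section

lemma slice1 {g : ℝ → ℝ → ℝ} (hg : Smooth2 g) (u v : ℝ) :
    HasDerivAt (fun a => g a v) (fderiv ℝ (fun p : ℝ × ℝ => g p.1 p.2) (u, v) (1, 0)) u := by
  have hG := ((hg.differentiable (by simp)) (u, v)).hasFDerivAt
  have hc : HasDerivAt (fun a : ℝ => ((a, v) : ℝ × ℝ)) (1, 0) u :=
    (hasDerivAt_id u).prodMk (hasDerivAt_const u v)
  exact hG.comp_hasDerivAt u hc

lemma slice2 {g : ℝ → ℝ → ℝ} (hg : Smooth2 g) (u v : ℝ) :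
    HasDerivAt (fun b => g u b) (fderiv ℝ (fun p : ℝ × ℝ => g p.1 p.2) (u, v) (0, 1)) v := by
  have hG := ((hg.differentiable (by simp)) (u, v)).hasFDerivAt
  have hc : HasDerivAt (fun b : ℝ => ((u, b) : ℝ × ℝ)) (0, 1) v :=
    (hasDerivAt_const v u).prodMk (hasDerivAt_id v)
  exact hG.comp_hasDerivAt v hc

lemma hasDerivAt_pd1 {g : ℝ → ℝ → ℝ} (hg : Smooth2 g) (u v : ℝ) :
    HasDerivAt (fun a => g a v) (pd1 g u v) u := by
  have h := slice1 hg u v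
  have h2 : pd1 g u v = fderiv ℝ (fun p : ℝ × ℝ => g p.1 p.2) (u, v) (1, 0) := h.deriv
  rw [h2]; exact h

lemma hasDerivAt_pd2 {g : ℝ → ℝ → ℝ} (hg : Smooth2 g) (u v : ℝ) :
    HasDerivAt (fun b => g u b) (pd2 g u v) v := by
  have h := slice2 hg u v
  have h2 : pd2 g u v = fderiv ℝ (fun p : ℝ × ℝ => g p.1 p.2) (u, v) (0, 1) := h.deriv
  rw [h2]; exact h

lemma smooth_pd2_s12 {g : ℝ → ℝ → ℝ} (hg : Smooth2 g) : Smooth2 (pd2 g) := by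
  have h : (fun p : ℝ × ℝ => pd2 g p.1 p.2) =
      fun p : ℝ × ℝ => fderiv ℝ (fun q : ℝ × ℝ => g q.1 q.2) p (0, 1) := by
    funext p
    exact (slice2 hg p.1 p.2).deriv
  rw [Smooth2, h]
  exact (hg.fderiv_right (by simp)).clm_apply contDiff_const

lemma mixed {g : ℝ → ℝ → ℝ} (hg : Smooth2 g) (u v : ℝ) :
    HasDerivAt (fun b => pd1 g u b) (pd1 (pd2 g) u v) v := by
  set G := fun p : ℝ × ℝ => g p.1 p.2 with hGdef
  have hG' : ∀ p, HasFDerivAt G (fderiv ℝ G p) p := fun p =>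
    ((hg.differentiable (by simp)) p).hasFDerivAt
  have hG'' : HasFDerivAt (fderiv ℝ G) (fderiv ℝ (fderiv ℝ G) (u, v)) (u, v) :=
    (((hg.fderiv_right (m := (⊤ : ℕ∞)) (by simp)).differentiable (by simp)) (u, v)).hasFDerivAt
  have hsym := second_derivative_symmetric hG' hG'' (0, 1) (1, 0)
  -- derivative of b ↦ pd1 g u b
  have hc2 : HasDerivAt (fun b : ℝ => ((u, b) : ℝ × ℝ)) (0, 1) v :=
    (hasDerivAt_const v u).prodMk (hasDerivAt_id v)
  have h1 : HasDerivAt (fun b => fderiv ℝ G (u, b)) (fderiv ℝ (fderiv ℝ G) (u, v) (0, 1)) v :=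
    hG''.comp_hasDerivAt v hc2
  have h2 : HasDerivAt (fun b => fderiv ℝ G (u, b) (1, 0))
      (fderiv ℝ (fderiv ℝ G) (u, v) (0, 1) (1, 0)) v := by
    simpa using h1.clm_apply (hasDerivAt_const v ((1, 0) : ℝ × ℝ))
  have heq1 : (fun b => pd1 g u b) = fun b => fderiv ℝ G (u, b) (1, 0) := by
    funext b; exact (slice1 hg u b).deriv
  -- derivative of a ↦ pd2 g a v
  have hc1 : HasDerivAt (fun a : ℝ => ((a, v) : ℝ × ℝ)) (1, 0) u :=
    (hasDerivAt_id u).prodMk (hasDerivAt_const u v)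
  have h3 : HasDerivAt (fun a => fderiv ℝ G (a, v)) (fderiv ℝ (fderiv ℝ G) (u, v) (1, 0)) u :=
    hG''.comp_hasDerivAt u hc1
  have h4 : HasDerivAt (fun a => fderiv ℝ G (a, v) (0, 1))
      (fderiv ℝ (fderiv ℝ G) (u, v) (1, 0) (0, 1)) u := by
    simpa using h3.clm_apply (hasDerivAt_const u ((0, 1) : ℝ × ℝ))
  have heq2 : (fun a => pd2 g a v) = fun a => fderiv ℝ G (a, v) (0, 1) := by
    funext a; exact (slice2 hg a v).deriv
  have h5 : pd1 (pd2 g) u v = fderiv ℝ (fderiv ℝ G) (u, v) (1, 0) (0, 1) := by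
    rw [pd1, heq2]; exact h4.deriv
  rw [heq1, h5, ← hsym]
  exact h2

/-- the commutator of the invariant differentiation operators satisfies
[Dᵘⁱ, Dᵛⁱ] = ((1/2)I⁰³ − 2) Dᵘⁱ + (1/2) I⁰³ Dᵛⁱ. -/
theorem statement12
    (f : ℝ → ℝ → ℝ) (hf : Smooth2 f)
    (hW : ∀ u v : ℝ, Wrel f u v ≠ 0) :
    ∀ g : ℝ → ℝ → ℝ, Smooth2 g →
    ∀ u v : ℝ,
      DuInv f (DvInv g) u v - DvInv (DuInv f g) u v =
        ((1 / 2) * I03 f u v - 2) * DuInv f g u v +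
        (1 / 2) * I03 f u v * DvInv g u v := by
  intro g hg u v
  have hf2 := smooth_pd2_s12 hf
  have hf22 := smooth_pd2_s12 hf2
  have hg2 := smooth_pd2_s12 hg
  have hfv := hasDerivAt_pd2 hf u v
  have hfvv := hasDerivAt_pd2 hf2 u v
  have hfvvv := hasDerivAt_pd2 hf22 u v
  have hgvv := hasDerivAt_pd2 hg2 u v
  have hg1v := mixed hg u v
  have hg2u := hasDerivAt_pd1 hg2 u v
  have e1 : pd1 (DvInv g) u v = v * pd1 (pd2 g) u v := (hg2u.const_mul v).deriv
  have e2 : pd2 (DvInv g) u v = 1 * pd2 g u v + v * pd2 (pd2 g) u v :=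
    ((hasDerivAt_id v).mul hgvv).deriv
  have hWd := ((hfv.const_mul (2:ℝ)).sub
      (((hasDerivAt_id v).const_mul (2:ℝ)).mul hfvv)).add
      ((hasDerivAt_pow 2 v).mul hfvvv)
  have hA := (hasDerivAt_pow 2 v).const_mul (2:ℝ)
  have hC := hg1v.sub ((((hasDerivAt_id v).const_mul ((1:ℝ)/2)).mul hfvvv).mul hgvv)
  have hQ := (hA.div hWd (hW u v)).mul hC
  have e3 : pd2 (DuInv f g) u v = _ := hQ.deriv
  have E : DuInv f (DvInv g) u v - DvInv (DuInv f g) u v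
      = 2 * v ^ 2 / Wrel f u v *
          (pd1 (DvInv g) u v - 1 / 2 * v * pd2 (pd2 f) u v * pd2 (DvInv g) u v)
        - v * pd2 (DuInv f g) u v := rfl
  have hI : I03 f u v = 2 * v ^ 3 * pd2 (pd2 (pd2 f)) u v / Wrel f u v := rfl
  have hDu : DuInv f g u v = 2 * v ^ 2 / Wrel f u v *
      (pd1 g u v - 1 / 2 * v * pd2 (pd2 f) u v * pd2 g u v) := rfl
  have hDv : DvInv g u v = v * pd2 g u v := rfl
  rw [E, e1, e2, e3, hI, hDu, hDv]
  have hW0 : 2 * f u v - 2 * v * pd2 f u v + v ^ 2 * pd2 (pd2 f) u v ≠ 0 := hW u v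
  simp only [Wrel, id_eq, Pi.add_apply, Pi.sub_apply, Pi.mul_apply, Pi.div_apply]
  generalize 2 * f u v - 2 * v * pd2 f u v + v ^ 2 * pd2 (pd2 f) u v = W at hW0 ⊢
  field_simp [hW0]
  ring
end
end
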